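/- Let F = x(xy + z^2) ∈ ℂ[x,y,z], a plane cubic of Waring rank 5. Then the forbidden locus of F is the single point [1:0:0] ∈ ℙ^2; that is, for a nonzero triple (a,b,c) ∈ ℂ^3, the linear form ax + by + cz lies in the Waring locus W_F if and only if (b,c) ≠ (0,0). -/

import Mathlib

open MvPolynomial

noncomputable section

/-- The linear form `c₀x₀ + ⋯ + cₙxₙ` with coefficient vector `c`. -/
def lin {σ : Type*} [Fintype σ] (c : σ → ℂ) : MvPolynomial σ ℂ :=
  ∑ i, C (c i) * X i

/-- `F` admits a Waring decomposition `F = L₁^d + ⋯ + L_r^d`. -/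
def HasWaringDecomp {σ : Type*} [Fintype σ] (d : ℕ) (F : MvPolynomial σ ℂ) (r : ℕ) : Prop :=
  ∃ L : Fin r → σ → ℂ, F = ∑ j, lin (L j) ^ d

/-- The Waring rank of `F` (as a form of degree `d`). -/
def waringRank {σ : Type*} [Fintype σ] (d : ℕ) (F : MvPolynomial σ ℂ) : ℕ :=
  sInf {r | HasWaringDecomp d F r}

/-- The linear form with coefficient vector `a` lies in the Waring locus of `F`:
there are linear forms `L₂, …, L_r` with `r = rk F` such that `F` lies in the
`ℂ`-linear span of `L^d, L₂^d, …, L_r^d`. -/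
def InWaringLocus {σ : Type*} [Fintype σ] (d : ℕ) (F : MvPolynomial σ ℂ) (a : σ → ℂ) : Prop :=
  ∃ (c : Fin (waringRank d F) → ℂ) (L : Fin (waringRank d F) → σ → ℂ)
    (j₀ : Fin (waringRank d F)), L j₀ = a ∧ F = ∑ j, c j • lin (L j) ^ d

/-!
Write `F = x(xy + z²)` and suppose `F + s·x³ = ∑ⱼ cⱼ (vⱼ · x)³`. Polarizing, the moments
`∑ⱼ cⱼ (vⱼ·p)(vⱼ·q)(vⱼ·r)` are the polar form of `F + s·x³`. Contracting with `x` shows that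
the `vⱼ` span `ℂ³`, so with at most four summands the linear relations among them form a line.
The weight vectors `(cⱼ q(vⱼ))ⱼ` of the quadrics `q = y², yz, z² - xy`, apolar to `F + s·x³`, are
such relations, hence proportional; then `∑ⱼ cⱼ vⱼ₀ vⱼ₂²` is a multiple of `∑ⱼ cⱼ vⱼ₀ vⱼ₁² = 0`,
although it equals `1/3`. With `s = 0` this gives rank `≥ 5`; with `s = -c·a₀³` it rules out a
summand `c·(a₀x)³` in a five-term decomposition. Conversely, the substitutions
`(x, y, z) ↦ (l x, ν²/l y, ν z)` and `(x, y - 2t z - t² x, z + t x)` rescale `F`, so they preserve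
its Waring locus, and they carry `y`, `z` or `x + y`, each of which occurs in an explicit
five-term decomposition, to any `a` with `(a₁, a₂) ≠ (0, 0)`.
-/

open Matrix Complex

theorem six_mul_sum_mul_mul_eq_polarization {R V ι : Type*} [CommRing R] [AddCommGroup V]
    [Fintype ι] (c : ι → R) (ℓ : ι → V →+ R) (G : V → R)
    (hG : ∀ u, G u = ∑ j, c j * ℓ j u ^ 3) (p q r : V) :
    6 * ∑ j, c j * (ℓ j p * ℓ j q * ℓ j r) =
      G (p + q + r) - G (p + q) - G (p + r) - G (q + r) + G p + G q + G r := by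
  simp only [hG, map_add, ← Finset.sum_sub_distrib, ← Finset.sum_add_distrib, Finset.mul_sum]
  exact Finset.sum_congr rfl fun j _ => by ring

theorem exists_eq_smul_of_finrank_le_one {K V : Type*} [Field K] [AddCommGroup V] [Module K V]
    {W : Submodule K V} [FiniteDimensional K W] (hW : Module.finrank K W ≤ 1) {x y : V}
    (hx : x ∈ W) (hy : y ∈ W) (hx0 : x ≠ 0) : ∃ t : K, y = t • x := by
  have hx0' : (⟨x, hx⟩ : W) ≠ 0 := by simpa using hx0
  have hW1 : Module.finrank K W = 1 :=
    le_antisymm hW (Module.finrank_pos_iff_exists_ne_zero.2 ⟨_, hx0'⟩)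
  obtain ⟨t, ht⟩ := exists_smul_eq_of_finrank_eq_one hW1 hx0' ⟨y, hy⟩
  exact ⟨t, by simpa using (congrArg Subtype.val ht).symm⟩

theorem mul_mul_mul_eq_sq_mul_of {K : Type*} [CommRing K] [IsDomain K] {c a b d t r : K}
    (h₁ : c * (b * d) = t * (c * (b * b)))
    (h₂ : c * (d * d) - c * (a * b) = r * (c * (b * b))) :
    c * (a * d * d) = t ^ 2 * (c * (a * b * b)) := by
  rcases eq_or_ne c 0 with rfl | hc
  · simp
  rcases eq_or_ne b 0 with rfl | hb
  · have : d = 0 := by simpa [hc] using h₂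
    simp [this]
  · have : d = t * b := mul_left_cancel₀ (mul_ne_zero hc hb) (by linear_combination h₁)
    rw [this]; ring

section Waring

variable {σ : Type*} [Fintype σ] {d : ℕ} {F : MvPolynomial σ ℂ}

theorem eval_lin (u v : σ → ℂ) : eval u (lin v) = v ⬝ᵥ u := by
  simp [lin, dotProduct]

theorem lin_smul (t : ℂ) (v : σ → ℂ) : lin (t • v) = C t * lin v := by
  simp [lin, Finset.mul_sum, C_mul, mul_assoc]

theorem aeval_lin (N : Matrix σ σ ℂ) (v : σ → ℂ) :
    aeval (fun i => lin (N i)) (lin v) = lin (v ᵥ* N) := by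
  simp only [lin, map_sum, map_mul, aeval_C, aeval_X, algebraMap_eq, vecMul, dotProduct,
    Finset.mul_sum]
  rw [Finset.sum_comm]
  simp [Finset.sum_mul, mul_assoc]

theorem hasWaringDecomp_of_eq_sum_smul {n : ℕ} (hd : d ≠ 0) (c : Fin n → ℂ)
    (L : Fin n → σ → ℂ) (h : F = ∑ j, c j • lin (L j) ^ d) : HasWaringDecomp d F n := by
  choose u hu using fun j => IsAlgClosed.exists_pow_nat_eq (c j) (Nat.pos_of_ne_zero hd)
  refine ⟨fun j => u j • L j, h.trans (Finset.sum_congr rfl fun j _ => ?_)⟩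
  rw [lin_smul, mul_pow, ← C_pow, hu, smul_eq_C_mul]

theorem waringRank_eq_of_forall_lt {r : ℕ} (h : HasWaringDecomp d F r)
    (hlt : ∀ s < r, ¬ HasWaringDecomp d F s) : waringRank d F = r :=
  le_antisymm (Nat.sInf_le h) (le_csInf ⟨r, h⟩ fun s hs => not_lt.1 fun hsr => hlt s hsr hs)

theorem inWaringLocus_iff_of_waringRank_eq {r : ℕ} (hr : waringRank d F = r) (a : σ → ℂ) :
    InWaringLocus d F a ↔ ∃ (c : Fin r → ℂ) (L : Fin r → σ → ℂ) (j₀ : Fin r),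
      L j₀ = a ∧ F = ∑ j, c j • lin (L j) ^ d := by
  unfold InWaringLocus
  rw [hr]

theorem inWaringLocus_of_eq_sum_smul {r : ℕ} (hr : waringRank d F = r) (c : Fin r → ℂ)
    (L : Fin r → σ → ℂ) (h : F = ∑ j, c j • lin (L j) ^ d) (j₀ : Fin r) :
    InWaringLocus d F (L j₀) :=
  (inWaringLocus_iff_of_waringRank_eq hr _).2 ⟨c, L, j₀, rfl, h⟩

theorem InWaringLocus.vecMul {a : σ → ℂ} {N : Matrix σ σ ℂ} {μ : ℂ} (hμ : μ ≠ 0)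
    (hN : aeval (fun i => lin (N i)) F = μ • F) (ha : InWaringLocus d F a) :
    InWaringLocus d F (a ᵥ* N) := by
  obtain ⟨c, L, j₀, rfl, hF⟩ := ha
  refine ⟨fun j => μ⁻¹ * c j, fun j => L j ᵥ* N, j₀, rfl, ?_⟩
  calc F = μ⁻¹ • aeval (fun i => lin (N i)) F := by rw [hN, inv_smul_smul₀ hμ]
    _ = _ := by
      simp only [hF, map_sum, map_smul, map_pow, aeval_lin, Finset.smul_sum, smul_smul]

end Waring

def conicTangent : MvPolynomial (Fin 3) ℂ := X 0 * (X 0 * X 1 + X 2 ^ 2)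

/-- The polar trilinear form of `conicTangent + s • X 0 ^ 3`. -/
def conicTangentPolar (s : ℂ) (p q r : Fin 3 → ℂ) : ℂ :=
  s * (p 0 * q 0 * r 0) + (p 0 * q 0 * r 1 + p 0 * q 1 * r 0 + p 1 * q 0 * r 0 +
    p 0 * q 2 * r 2 + p 2 * q 0 * r 2 + p 2 * q 2 * r 0) / 3

theorem sum_mul_dotProduct_eq_conicTangentPolar {ι : Type*} [Fintype ι] {c : ι → ℂ}
    {v : ι → Fin 3 → ℂ} {s : ℂ}
    (h : conicTangent + C s * X 0 ^ 3 = ∑ j, c j • lin (v j) ^ 3) (p q r : Fin 3 → ℂ) :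
    ∑ j, c j * (v j ⬝ᵥ p * v j ⬝ᵥ q * v j ⬝ᵥ r) = conicTangentPolar s p q r := by
  have hG (u : Fin 3 → ℂ) : u 0 * (u 0 * u 1 + u 2 ^ 2) + s * u 0 ^ 3 =
      ∑ j, c j * (dotProductBilin ℂ ℂ (v j)).toAddMonoidHom u ^ 3 := by
    simpa [conicTangent, eval_lin] using congrArg (eval u) h
  have := six_mul_sum_mul_mul_eq_polarization c
    (fun j => (dotProductBilin ℂ ℂ (v j)).toAddMonoidHom) _ hG p q r
  simp only [LinearMap.toAddMonoidHom_coe, dotProductBilin_apply_apply, Pi.add_apply] at this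
  refine mul_left_cancel₀ (by norm_num : (6 : ℂ) ≠ 0) (this.trans ?_)
  simp only [conicTangentPolar]
  ring

section Moments

variable {ι : Type*} [Fintype ι] {c : ι → ℂ} {v : ι → Fin 3 → ℂ} {s : ℂ}
  (hT : ∀ p q r, ∑ j, c j * (v j ⬝ᵥ p * v j ⬝ᵥ q * v j ⬝ᵥ r) = conicTangentPolar s p q r)
include hT

theorem linearCombination_eq_conicTangentPolar (q r : Fin 3 → ℂ) :
    Fintype.linearCombination ℂ v (fun j => c j * (v j ⬝ᵥ q * v j ⬝ᵥ r)) =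
      fun ℓ => conicTangentPolar s q r (Pi.single ℓ 1) := by
  ext ℓ
  rw [Fintype.linearCombination_apply, Finset.sum_apply, ← hT]
  exact Finset.sum_congr rfl fun j _ => by simp; ring

theorem surjective_linearCombination :
    Function.Surjective (Fintype.linearCombination ℂ v) := by
  intro z
  -- `![3 z₁, 3 z₀ - 9 s z₁, 3 z₂]` is the preimage of `z` under the invertible matrix
  -- `!![s, 1/3, 0; 1/3, 0, 0; 0, 0, 1/3]` of `conicTangentPolar s e₀`.
  refine ⟨_, (linearCombination_eq_conicTangentPolar hT (Pi.single 0 1)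
    ![3 * z 1, 3 * z 0 - 9 * s * z 1, 3 * z 2]).trans ?_⟩
  ext ℓ
  fin_cases ℓ <;> simp [conicTangentPolar]; ring

theorem finrank_ker_linearCombination_le_one (hι : Fintype.card ι ≤ 4) :
    Module.finrank ℂ (LinearMap.ker (Fintype.linearCombination ℂ v)) ≤ 1 := by
  have := LinearMap.finrank_range_add_finrank_ker (Fintype.linearCombination ℂ v)
  rw [LinearMap.range_eq_top.2 (surjective_linearCombination hT), finrank_top] at this
  simp only [Module.finrank_fintype_fun_eq_card, Fintype.card_fin] at this
  omega

theorem mul_coord_one_sq_ne_zero : (fun j => c j * (v j 1 * v j 1)) ≠ 0 := by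
  intro h0
  have h001 := hT (Pi.single 0 1) (Pi.single 0 1) (Pi.single 1 1)
  have hj (j : ι) : c j * (v j 0 * v j 0 * v j 1) = 0 := by
    have h0j : c j * (v j 1 * v j 1) = 0 := by simpa using congrFun h0 j
    have hc : c j * v j 1 = 0 := pow_eq_zero_iff two_ne_zero |>.1 (by linear_combination c j * h0j)
    linear_combination v j 0 * v j 0 * hc
  simp [conicTangentPolar, Finset.sum_eq_zero fun j _ => hj j] at h001

theorem five_le_card_of_sum_mul_dotProduct_eq : 5 ≤ Fintype.card ι := by
  by_contra! hι
  set f := Fintype.linearCombination ℂ v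
  have hker := finrank_ker_linearCombination_le_one hT (by omega)
  have hmem (q r : Fin 3 → ℂ) (h : ∀ ℓ, conicTangentPolar s q r (Pi.single ℓ 1) = 0) :
      (fun j => c j * (v j ⬝ᵥ q * v j ⬝ᵥ r)) ∈ LinearMap.ker f := by
    rw [LinearMap.mem_ker, linearCombination_eq_conicTangentPolar hT]
    exact funext h
  have hyy := hmem (Pi.single 1 1) (Pi.single 1 1) fun ℓ => by
    fin_cases ℓ <;> simp [conicTangentPolar]
  have hyz := hmem (Pi.single 1 1) (Pi.single 2 1) fun ℓ => by
    fin_cases ℓ <;> simp [conicTangentPolar]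
  have hzz_xy : (fun j => c j * (v j ⬝ᵥ Pi.single 2 1 * v j ⬝ᵥ Pi.single 2 1)) -
      (fun j => c j * (v j ⬝ᵥ Pi.single 0 1 * v j ⬝ᵥ Pi.single 1 1)) ∈ LinearMap.ker f := by
    rw [LinearMap.mem_ker, map_sub, linearCombination_eq_conicTangentPolar hT,
      linearCombination_eq_conicTangentPolar hT, sub_eq_zero]
    ext ℓ
    fin_cases ℓ <;> simp [conicTangentPolar]
  simp only [dotProduct_single_one] at hyy hyz hzz_xy
  obtain ⟨t, ht⟩ :=
    exists_eq_smul_of_finrank_le_one hker hyy hyz (mul_coord_one_sq_ne_zero hT)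
  obtain ⟨r, hr⟩ :=
    exists_eq_smul_of_finrank_le_one hker hyy hzz_xy (mul_coord_one_sq_ne_zero hT)
  have hxzz := hT (Pi.single 0 1) (Pi.single 2 1) (Pi.single 2 1)
  have hxyy := hT (Pi.single 0 1) (Pi.single 1 1) (Pi.single 1 1)
  simp [conicTangentPolar] at hxzz hxyy
  have key : ∑ j, c j * (v j 0 * v j 2 * v j 2) =
      t ^ 2 * ∑ j, c j * (v j 0 * v j 1 * v j 1) := by
    rw [Finset.mul_sum]
    refine Finset.sum_congr rfl fun j _ => mul_mul_mul_eq_sq_mul_of (r := r) ?_ ?_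
    · simpa using congrFun ht j
    · simpa using congrFun hr j
  rw [hxzz, hxyy] at key
  norm_num at key

end Moments

theorem five_le_card_of_conicTangent_add_eq_sum {ι : Type*} [Fintype ι] {c : ι → ℂ}
    {v : ι → Fin 3 → ℂ} {s : ℂ}
    (h : conicTangent + C s * X 0 ^ 3 = ∑ j, c j • lin (v j) ^ 3) : 5 ≤ Fintype.card ι :=
  five_le_card_of_sum_mul_dotProduct_eq (sum_mul_dotProduct_eq_conicTangentPolar h)

theorem conicTangent_eq_sum_smul_Y : conicTangent = ∑ j : Fin 5,
    (![-1 / 3, 1 / 12, 1 / 12, -1 / 12, -1 / 12] : Fin 5 → ℂ) j •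
      lin ((![![0, 1, 0], ![1, 1, 1], ![1, 1, -1], ![1, -1, I], ![1, -1, -I]] :
        Fin 5 → Fin 3 → ℂ) j) ^ 3 := by
  apply MvPolynomial.funext
  intro x
  simp [conicTangent, eval_lin, Fin.sum_univ_five, dotProduct, Fin.sum_univ_three]
  linear_combination (1 / 2 * (x 0 - x 1) * x 2 ^ 2) * I_sq

theorem waringRank_conicTangent : waringRank 3 conicTangent = 5 := by
  refine waringRank_eq_of_forall_lt
    (hasWaringDecomp_of_eq_sum_smul three_ne_zero _ _ conicTangent_eq_sum_smul_Y) ?_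
  rintro r hr ⟨L, hL⟩
  have := five_le_card_of_conicTangent_add_eq_sum (c := fun _ => 1) (v := L) (s := 0)
    (by simpa using hL)
  simp only [Fintype.card_fin] at this
  omega

theorem not_inWaringLocus_conicTangent {a : Fin 3 → ℂ} (h₁ : a 1 = 0) (h₂ : a 2 = 0) :
    ¬ InWaringLocus 3 conicTangent a := by
  rw [inWaringLocus_iff_of_waringRank_eq waringRank_conicTangent]
  rintro ⟨c, L, j₀, rfl, hF⟩
  have hlin : lin (L j₀) = C (L j₀ 0) * X 0 := by simp [lin, Fin.sum_univ_three, h₁, h₂]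
  rw [Fin.sum_univ_succAbove _ j₀, hlin] at hF
  have := five_le_card_of_conicTangent_add_eq_sum (s := -(c j₀ * L j₀ 0 ^ 3))
    (c := fun j => c (j₀.succAbove j)) (v := fun j => L (j₀.succAbove j))
    (by rw [hF, smul_eq_C_mul, C_neg, C_mul, C_pow]; ring)
  simp at this

def conicTangentTorus (l ν : ℂ) : Matrix (Fin 3) (Fin 3) ℂ :=
  !![l, 0, 0; 0, ν ^ 2 / l, 0; 0, 0, ν]

def conicTangentShear (t : ℂ) : Matrix (Fin 3) (Fin 3) ℂ :=
  !![1, 0, 0; -t ^ 2, 1, -2 * t; t, 0, 1]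

theorem InWaringLocus.vecMul_conicTangentTorus {a : Fin 3 → ℂ} {l ν : ℂ} (hl : l ≠ 0)
    (hν : ν ≠ 0) (ha : InWaringLocus 3 conicTangent a) :
    InWaringLocus 3 conicTangent (a ᵥ* conicTangentTorus l ν) := by
  refine ha.vecMul (μ := l * ν ^ 2) (mul_ne_zero hl (pow_ne_zero 2 hν)) ?_
  have hν2 : C (ν ^ 2 / l) * C l = (C ν : MvPolynomial (Fin 3) ℂ) ^ 2 := by
    rw [← C_mul, ← C_pow, div_mul_cancel₀ _ hl]
  simp [conicTangent, conicTangentTorus, lin, Fin.sum_univ_three, smul_eq_C_mul]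
  linear_combination (C l * X 0 ^ 2 * X 1) * hν2

theorem InWaringLocus.vecMul_conicTangentShear {a : Fin 3 → ℂ} (t : ℂ)
    (ha : InWaringLocus 3 conicTangent a) :
    InWaringLocus 3 conicTangent (a ᵥ* conicTangentShear t) := by
  refine ha.vecMul one_ne_zero ?_
  simp [conicTangent, conicTangentShear, lin, Fin.sum_univ_three, map_ofNat]
  ring

theorem inWaringLocus_conicTangent_Y : InWaringLocus 3 conicTangent ![0, 1, 0] := by
  simpa using
    inWaringLocus_of_eq_sum_smul waringRank_conicTangent _ _ conicTangent_eq_sum_smul_Y 0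

theorem inWaringLocus_conicTangent_Z : InWaringLocus 3 conicTangent ![0, 0, 1] := by
  have h : conicTangent = ∑ j : Fin 5, (![1 / 3, -1 / 3, 3 / 2, -3, 3 / 2] : Fin 5 → ℂ) j •
      lin ((![![0, 0, 1], ![-1, 0, 1], ![0, 1, 1], ![-1 / 3, 1, 1], ![-2 / 3, 1, 1]] :
        Fin 5 → Fin 3 → ℂ) j) ^ 3 := by
    apply MvPolynomial.funext
    intro x
    simp [conicTangent, eval_lin, Fin.sum_univ_five, dotProduct, Fin.sum_univ_three]
    ring
  simpa using inWaringLocus_of_eq_sum_smul waringRank_conicTangent _ _ h 0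

theorem inWaringLocus_conicTangent_XY : InWaringLocus 3 conicTangent ![1, 1, 0] := by
  have h : conicTangent = ∑ j : Fin 5,
      (![-1 / 12, 1 / 30, 1 / 30, 1 / 120, 1 / 120] : Fin 5 → ℂ) j •
      lin ((![![1, 1, 0], ![2, 1, 1], ![2, 1, -1], ![-3, 1, 2 * I], ![-3, 1, -(2 * I)]] :
        Fin 5 → Fin 3 → ℂ) j) ^ 3 := by
    apply MvPolynomial.funext
    intro x
    simp [conicTangent, eval_lin, Fin.sum_univ_five, dotProduct, Fin.sum_univ_three]
    linear_combination ((3 * x 0 - x 1) / 5 * x 2 ^ 2) * I_sq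
  simpa using inWaringLocus_of_eq_sum_smul waringRank_conicTangent _ _ h 0

theorem inWaringLocus_conicTangent_of_one_eq_zero {a : Fin 3 → ℂ} (h₁ : a 1 = 0)
    (h₂ : a 2 ≠ 0) : InWaringLocus 3 conicTangent a := by
  convert (inWaringLocus_conicTangent_Z.vecMul_conicTangentTorus one_ne_zero h₂)
    |>.vecMul_conicTangentShear (a 0 / a 2) using 1
  ext i
  fin_cases i <;> simp [conicTangentTorus, conicTangentShear, vecMul, dotProduct,
    Fin.sum_univ_three, h₁]
  field_simp

theorem inWaringLocus_conicTangent_of_disc_eq_zero {a : Fin 3 → ℂ} (h₁ : a 1 ≠ 0)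
    (hD : 4 * a 0 * a 1 + a 2 ^ 2 = 0) : InWaringLocus 3 conicTangent a := by
  obtain ⟨ν, hν⟩ := IsAlgClosed.exists_pow_nat_eq (a 1) two_pos
  have hν0 : ν ≠ 0 := by rintro rfl; exact h₁ (by simpa using hν.symm)
  convert (inWaringLocus_conicTangent_Y.vecMul_conicTangentTorus one_ne_zero hν0)
    |>.vecMul_conicTangentShear (-a 2 / (2 * a 1)) using 1
  ext i
  fin_cases i <;> simp [conicTangentTorus, conicTangentShear, vecMul, dotProduct,
    Fin.sum_univ_three, hν] <;> field_simp
  linear_combination hD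

theorem inWaringLocus_conicTangent_of_disc_ne_zero {a : Fin 3 → ℂ} (h₁ : a 1 ≠ 0)
    (hD : 4 * a 0 * a 1 + a 2 ^ 2 ≠ 0) : InWaringLocus 3 conicTangent a := by
  set D := 4 * a 0 * a 1 + a 2 ^ 2 with hD_def
  obtain ⟨ν, hν⟩ := IsAlgClosed.exists_pow_nat_eq (D / 4) two_pos
  have hν0 : ν ≠ 0 := by rintro rfl; exact hD (by simpa using hν.symm)
  have hl : D / (4 * a 1) ≠ 0 := div_ne_zero hD (by simpa using h₁)
  convert (inWaringLocus_conicTangent_XY.vecMul_conicTangentTorus hl hν0)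
    |>.vecMul_conicTangentShear (-a 2 / (2 * a 1)) using 1
  ext i
  fin_cases i <;> simp [conicTangentTorus, conicTangentShear, vecMul, dotProduct,
    Fin.sum_univ_three, hν] <;> field_simp
  linear_combination -4 * hD_def

theorem inWaringLocus_conicTangent_iff (a : Fin 3 → ℂ) :
    InWaringLocus 3 conicTangent a ↔ ¬ (a 1 = 0 ∧ a 2 = 0) := by
  refine ⟨fun ha h => not_inWaringLocus_conicTangent h.1 h.2 ha, fun h => ?_⟩
  rcases eq_or_ne (a 1) 0 with h₁ | h₁
  · exact inWaringLocus_conicTangent_of_one_eq_zero h₁ fun h₂ => h ⟨h₁, h₂⟩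
  rcases eq_or_ne (4 * a 0 * a 1 + a 2 ^ 2) 0 with hD | hD
  · exact inWaringLocus_conicTangent_of_disc_eq_zero h₁ hD
  · exact inWaringLocus_conicTangent_of_disc_ne_zero h₁ hD

/-- forbidden locus of the plane cubic `F = x(xy + z²)` (a conic plus a
tangent line): `F` has Waring rank 5 and its forbidden locus is the single point
`[1:0:0]`, i.e. a nonzero linear form `ax + by + cz` lies in the Waring locus iff
`(b, c) ≠ (0, 0)`. -/
theorem forbidden_locus_conic_plus_tangent_line :
    waringRank 3 (X 0 * (X 0 * X 1 + X 2 ^ 2) : MvPolynomial (Fin 3) ℂ) = 5 ∧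
    ∀ a : Fin 3 → ℂ, a ≠ 0 →
      (InWaringLocus 3 (X 0 * (X 0 * X 1 + X 2 ^ 2) : MvPolynomial (Fin 3) ℂ) a ↔
        ¬ (a 1 = 0 ∧ a 2 = 0)) :=
  ⟨waringRank_conicTangent, fun a _ => inWaringLocus_conicTangent_iff a⟩

end
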